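/- Let K_1,…,K_n be positive semidefinite symmetric m×m real matrices, let ρ_e > 0 and δ_e ∈ [0,1] for e = 1,…,n, and suppose K(δ) = ∑_e ρ_e E(δ_e) K_e is positive definite (where E(δ) = ((1-δ)/E_0 + δ/E_D)^{-1} with 0 < E_D < E_0). Then the function J(δ, u) = 2 f^T u − u^T K(δ) u (for any fixed f ∈ ℝ^m) is concave in the joint variable (δ, u) ∈ [0,1]^n × ℝ^m. Concretely, its Hessian H satisfies (x,y)^T H (x,y) = −∑_e ρ_e E(δ_e) (y − v_e)^T K_e (y − v_e) ≤ 0 where v_e = x_e E(δ_e)(1/E_D − 1/E_0) u. -/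

import Mathlib

/-!
Since `1 / E(t) = (1 - t) / E₀ + t / E_D` is affine in `t` and positive on `[0, 1]`, each term
`ρₑ E(δₑ) uᵀ Kₑ u` is `ρₑ` times the perspective `(t, u) ↦ uᵀ Kₑ u / t` of a positive semidefinite
quadratic form, precomposed with an affine map. The perspective is jointly convex, so `J` is a
linear function minus a sum of convex ones. The Hessian identity is a completion of the square in
each element.
-/

open Matrix Finset

theorem ConvexOn.fun_sum {𝕜 E β ι : Type*} [Semiring 𝕜] [PartialOrder 𝕜] [AddCommMonoid E]
    [AddCommMonoid β] [PartialOrder β] [IsOrderedAddMonoid β] [SMul 𝕜 E] [Module 𝕜 β]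
    {s : Set E} (hs : Convex 𝕜 s) (t : Finset ι) {f : ι → E → β}
    (hf : ∀ i ∈ t, ConvexOn 𝕜 s (f i)) : ConvexOn 𝕜 s fun x => ∑ i ∈ t, f i x := by
  classical
  induction t using Finset.induction_on with
  | empty => simpa only [Finset.sum_empty] using convexOn_const (0 : β) hs
  | insert i t hi ih =>
    simp only [Finset.sum_insert hi]
    exact (hf i (mem_insert_self i t)).add (ih fun j hj => hf j (mem_insert_of_mem hj))

namespace Matrix

theorem PosSemidef.isSymm {ι : Type*} {K : Matrix ι ι ℝ} (hK : K.PosSemidef) : K.IsSymm :=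
  isHermitian_iff_isSymm.1 hK.isHermitian

variable {ι : Type*} [Fintype ι]

theorem IsSymm.dotProduct_mulVec_comm {R : Type*} [CommSemiring R] {K : Matrix ι ι R}
    (hK : K.IsSymm) (u v : ι → R) : u ⬝ᵥ K *ᵥ v = v ⬝ᵥ K *ᵥ u := by
  rw [← dotProduct_transpose_mulVec, hK.eq]

theorem IsSymm.dotProduct_mulVec_smul_add_smul {R : Type*} [CommRing R] {K : Matrix ι ι R}
    (hK : K.IsSymm) (a b : R) (u v : ι → R) :
    (a • u + b • v) ⬝ᵥ K *ᵥ (a • u + b • v) =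
      a ^ 2 * (u ⬝ᵥ K *ᵥ u) + 2 * a * b * (u ⬝ᵥ K *ᵥ v) + b ^ 2 * (v ⬝ᵥ K *ᵥ v) := by
  simp only [mulVec_add, mulVec_smul, add_dotProduct, dotProduct_add, smul_dotProduct,
    dotProduct_smul, smul_eq_mul, hK.dotProduct_mulVec_comm v u]
  ring

theorem IsSymm.dotProduct_mulVec_sub_smul {R : Type*} [CommRing R] {K : Matrix ι ι R}
    (hK : K.IsSymm) (c : R) (u v : ι → R) :
    (u - c • v) ⬝ᵥ K *ᵥ (u - c • v) =
      u ⬝ᵥ K *ᵥ u - 2 * c * (u ⬝ᵥ K *ᵥ v) + c ^ 2 * (v ⬝ᵥ K *ᵥ v) := by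
  have := hK.dotProduct_mulVec_smul_add_smul 1 (-c) u v
  rw [one_smul, neg_smul, ← sub_eq_add_neg] at this
  rw [this]
  ring

theorem dotProduct_sum_smul_mulVec {R κ : Type*} [CommSemiring R] (s : Finset κ) (c : κ → R)
    (K : κ → Matrix ι ι R) (u v : ι → R) :
    u ⬝ᵥ (∑ e ∈ s, c e • K e) *ᵥ v = ∑ e ∈ s, c e * (u ⬝ᵥ K e *ᵥ v) := by
  simp only [sum_mulVec, dotProduct_sum, smul_mulVec, dotProduct_smul, smul_eq_mul]

theorem PosSemidef.convexOn_dotProduct_mulVec_div {K : Matrix ι ι ℝ} (hK : K.PosSemidef) :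
    ConvexOn ℝ (Set.Ioi 0 ×ˢ Set.univ) fun p : ℝ × (ι → ℝ) => p.2 ⬝ᵥ K *ᵥ p.2 / p.1 := by
  refine ⟨(convex_Ioi 0).prod convex_univ, ?_⟩
  rintro ⟨s, u⟩ ⟨hs : 0 < s, -⟩ ⟨t, v⟩ ⟨ht : 0 < t, -⟩ a b ha hb hab
  set qu := u ⬝ᵥ K *ᵥ u
  set qv := v ⬝ᵥ K *ᵥ v
  set w := u ⬝ᵥ K *ᵥ v
  have hcross : 0 ≤ t ^ 2 * qu - 2 * t * s * w + s ^ 2 * qv := by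
    have := hK.dotProduct_mulVec_nonneg (t • u + (-s) • v)
    rw [star_trivial, hK.isSymm.dotProduct_mulVec_smul_add_smul] at this
    linarith
  have hst : 0 < a * s + b * t := convex_Ioi (0 : ℝ) hs ht ha hb hab
  have hgap : (a * (qu / s) + b * (qv / t)) * (a * s + b * t)
      - (a ^ 2 * qu + 2 * a * b * w + b ^ 2 * qv)
      = a * b * (t ^ 2 * qu - 2 * t * s * w + s ^ 2 * qv) / (s * t) := by
    field_simp
    ring
  simp only [Prod.smul_mk, Prod.mk_add_mk, smul_eq_mul, hK.isSymm.dotProduct_mulVec_smul_add_smul]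
  rw [div_le_iff₀ hst, ← sub_nonneg, hgap]
  exact div_nonneg (mul_nonneg (mul_nonneg ha hb) hcross) (mul_pos hs ht).le

theorem PosSemidef.convexOn_dotProduct_mulVec_div_affineMap {E : Type*} [AddCommGroup E]
    [Module ℝ E] {K : Matrix ι ι ℝ} (hK : K.PosSemidef) (ℓ : E →ᵃ[ℝ] ℝ) {s : Set E}
    (hs : Convex ℝ s) (hℓ : ∀ x ∈ s, 0 < ℓ x) :
    ConvexOn ℝ (s ×ˢ Set.univ) fun p : E × (ι → ℝ) => p.2 ⬝ᵥ K *ᵥ p.2 / ℓ p.1 :=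
  (hK.convexOn_dotProduct_mulVec_div.comp_affineMap (ℓ.prodMap (AffineMap.id ℝ _))).subset
    (fun p hp => ⟨hℓ p.1 hp.1, trivial⟩) (hs.prod convex_univ)

end Matrix

theorem stmt_6_general (n m : ℕ) (E0 ED : ℝ) (hED : 0 < ED) (hlt : ED < E0)
    (K : Fin n → Matrix (Fin m) (Fin m) ℝ) (hK : ∀ e, (K e).PosSemidef)
    (ρ : Fin n → ℝ) (hρ : ∀ e, 0 < ρ e)
    (f : Fin m → ℝ)
    (E : ℝ → ℝ) (hE : ∀ t, E t = ((1 - t) / E0 + t / ED)⁻¹) :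
    ConcaveOn ℝ (((Set.univ : Set (Fin n)).pi fun _ => Set.Icc (0:ℝ) 1) ×ˢ
        (Set.univ : Set (Fin m → ℝ)))
      (fun p : (Fin n → ℝ) × (Fin m → ℝ) =>
        2 * (f ⬝ᵥ p.2) - p.2 ⬝ᵥ (∑ e, (ρ e * E (p.1 e)) • K e).mulVec p.2) ∧
    ∀ (δ : Fin n → ℝ), (∀ e, δ e ∈ Set.Icc (0:ℝ) 1) →
      ∀ (u : Fin m → ℝ) (x : Fin n → ℝ) (y : Fin m → ℝ),
      (-(∑ e, x e ^ 2 * ρ e * (E (δ e)) ^ 3 * (1 / ED - 1 / E0) ^ 2 *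
            (u ⬝ᵥ (K e).mulVec u))
        + 2 * (∑ e, x e * ρ e * (E (δ e)) ^ 2 * (1 / ED - 1 / E0) *
            (y ⬝ᵥ (K e).mulVec u))
        - y ⬝ᵥ (∑ e, (ρ e * E (δ e)) • K e).mulVec y)
        = -(∑ e, ρ e * E (δ e) *
            ((y - (x e * E (δ e) * (1 / ED - 1 / E0)) • u) ⬝ᵥ
              (K e).mulVec (y - (x e * E (δ e) * (1 / ED - 1 / E0)) • u))) ∧
      (-(∑ e, x e ^ 2 * ρ e * (E (δ e)) ^ 3 * (1 / ED - 1 / E0) ^ 2 *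
            (u ⬝ᵥ (K e).mulVec u))
        + 2 * (∑ e, x e * ρ e * (E (δ e)) ^ 2 * (1 / ED - 1 / E0) *
            (y ⬝ᵥ (K e).mulVec u))
        - y ⬝ᵥ (∑ e, (ρ e * E (δ e)) • K e).mulVec y) ≤ 0 := by
  set ℓ : Fin n → (Fin n → ℝ) →ᵃ[ℝ] ℝ := fun e =>
    (AffineMap.lineMap E0⁻¹ ED⁻¹).comp (LinearMap.proj e).toAffineMap
  have hEℓ : ∀ e δ, E (δ e) = (ℓ e δ)⁻¹ := fun e δ => by
    simp [ℓ, hE, AffineMap.lineMap_apply_module, div_eq_mul_inv]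
  have hℓ_pos : ∀ e, ∀ δ ∈ (Set.univ : Set (Fin n)).pi fun _ => Set.Icc (0:ℝ) 1, 0 < ℓ e δ :=
    fun e δ hδ => (convex_Ioi 0).lineMap_mem (inv_pos.2 (hED.trans hlt)) (inv_pos.2 hED)
      (hδ e trivial)
  have hbox : Convex ℝ ((Set.univ : Set (Fin n)).pi fun _ => Set.Icc (0:ℝ) 1) :=
    convex_pi fun _ _ => convex_Icc 0 1
  refine ⟨?_, fun δ hδ u x y => ?_⟩
  · have hquad := ConvexOn.fun_sum (hbox.prod convex_univ) Finset.univ fun e _ =>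
      ((hK e).convexOn_dotProduct_mulVec_div_affineMap (ℓ e) hbox (hℓ_pos e)).smul (hρ e).le
    have hlin := ((2 : ℝ) • (dotProductBilin ℝ ℝ f).comp (LinearMap.snd ℝ _ _)).concaveOn
      (hbox.prod convex_univ)
    refine (hlin.sub hquad).congr fun p _ => ?_
    simp only [Pi.sub_apply, dotProduct_sum_smul_mulVec, hEℓ, LinearMap.smul_apply,
      LinearMap.comp_apply, LinearMap.snd_apply, dotProductBilin_apply_apply, smul_eq_mul,
      div_eq_mul_inv]
    exact congrArg _ (Finset.sum_congr rfl fun e _ => by ring)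
  · set d := 1 / ED - 1 / E0
    have hsquare : ∀ e, ρ e * E (δ e) *
        ((y - (x e * E (δ e) * d) • u) ⬝ᵥ (K e).mulVec (y - (x e * E (δ e) * d) • u)) =
          x e ^ 2 * ρ e * E (δ e) ^ 3 * d ^ 2 * (u ⬝ᵥ (K e).mulVec u)
            - 2 * (x e * ρ e * E (δ e) ^ 2 * d * (y ⬝ᵥ (K e).mulVec u))
            + ρ e * E (δ e) * (y ⬝ᵥ (K e).mulVec y) := fun e => by
      rw [(hK e).isSymm.dotProduct_mulVec_sub_smul]
      ring
    refine (fun hform => ⟨hform, hform.trans_le (neg_nonpos.2 ?_)⟩) ?_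
    · simp only [hsquare, dotProduct_sum_smul_mulVec, Finset.sum_add_distrib,
        Finset.sum_sub_distrib, ← Finset.mul_sum]
      ring
    · have hE_pos : ∀ e, 0 < E (δ e) := fun e =>
        hEℓ e δ ▸ inv_pos.2 (hℓ_pos e δ fun e _ => hδ e)
      exact Finset.sum_nonneg fun e _ => mul_nonneg (mul_nonneg (hρ e).le (hE_pos e).le)
        ((hK e).dotProduct_mulVec_nonneg _)

/-- Concavity of `J(δ,u) = 2 fᵀu − uᵀ K(δ) u` with
`K(δ) = ∑ₑ ρₑ E(δₑ) Kₑ`, `E(δ) = ((1-δ)/E_0 + δ/E_D)⁻¹`: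
`J` is concave on `[0,1]ⁿ × ℝᵐ` and its Hessian quadratic form equals
`−∑ₑ ρₑ E(δₑ) (y − vₑ)ᵀ Kₑ (y − vₑ) ≤ 0` where
`vₑ = xₑ E(δₑ)(1/E_D − 1/E_0) u`. -/
theorem stmt_6 (n m : ℕ) (E0 ED : ℝ) (hED : 0 < ED) (hlt : ED < E0)
    (K : Fin n → Matrix (Fin m) (Fin m) ℝ) (hK : ∀ e, (K e).PosSemidef)
    (ρ : Fin n → ℝ) (hρ : ∀ e, 0 < ρ e)
    (f : Fin m → ℝ)
    (E : ℝ → ℝ) (hE : ∀ t, E t = ((1 - t) / E0 + t / ED)⁻¹)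
    (hKpd : ∀ δ : Fin n → ℝ, (∀ e, δ e ∈ Set.Icc (0:ℝ) 1) →
      (∑ e, (ρ e * E (δ e)) • K e).PosDef) :
    ConcaveOn ℝ (((Set.univ : Set (Fin n)).pi fun _ => Set.Icc (0:ℝ) 1) ×ˢ
        (Set.univ : Set (Fin m → ℝ)))
      (fun p : (Fin n → ℝ) × (Fin m → ℝ) =>
        2 * (f ⬝ᵥ p.2) - p.2 ⬝ᵥ (∑ e, (ρ e * E (p.1 e)) • K e).mulVec p.2) ∧
    ∀ (δ : Fin n → ℝ), (∀ e, δ e ∈ Set.Icc (0:ℝ) 1) →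
      ∀ (u : Fin m → ℝ) (x : Fin n → ℝ) (y : Fin m → ℝ),
      (-(∑ e, x e ^ 2 * ρ e * (E (δ e)) ^ 3 * (1 / ED - 1 / E0) ^ 2 *
            (u ⬝ᵥ (K e).mulVec u))
        + 2 * (∑ e, x e * ρ e * (E (δ e)) ^ 2 * (1 / ED - 1 / E0) *
            (y ⬝ᵥ (K e).mulVec u))
        - y ⬝ᵥ (∑ e, (ρ e * E (δ e)) • K e).mulVec y)
        = -(∑ e, ρ e * E (δ e) *
            ((y - (x e * E (δ e) * (1 / ED - 1 / E0)) • u) ⬝ᵥ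
              (K e).mulVec (y - (x e * E (δ e) * (1 / ED - 1 / E0)) • u))) ∧
      (-(∑ e, x e ^ 2 * ρ e * (E (δ e)) ^ 3 * (1 / ED - 1 / E0) ^ 2 *
            (u ⬝ᵥ (K e).mulVec u))
        + 2 * (∑ e, x e * ρ e * (E (δ e)) ^ 2 * (1 / ED - 1 / E0) *
            (y ⬝ᵥ (K e).mulVec u))
        - y ⬝ᵥ (∑ e, (ρ e * E (δ e)) • K e).mulVec y) ≤ 0 :=
  stmt_6_general n m E0 ED hED hlt K hK ρ hρ f E hE
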